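/- Let n ≥ 1 and let G be the standard Gaussian measure on ℝⁿ (the n-fold product of the real Gaussian measure with mean 0 and variance 1). Then the mean of the logarithm of the norm satisfies ∫ ln ‖x‖ dG(x) = (1/2) ln 2 + (1/2) ψ(n/2), where ψ is the digamma function. -/

import Mathlib

/-! In polar coordinates `‖x‖` has density proportional to `r ^ (n - 1) * exp (-r ^ 2 / 2)` on
`(0, ∞)`, the constant being fixed by the total mass `1`. Substituting `t = r ^ 2 / 2`, with
`s = n / 2`, the two radial integrals become `2 ^ (s - 1) * Γ(s)` and
`2 ^ (s - 1) * (log 2 * Γ(s) + Γ'(s)) / 2`, the latter because `log r = (log 2 + log t) / 2` and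
`∫ t ^ (s - 1) * exp (-t) * log t = Γ'(s)` is the differentiated Gamma integral. -/

open MeasureTheory Real Filter Topology

/-- The characteristic function of a measure on a real inner product space:
`charFun μ u = ∫ exp(i ⟪u, x⟫) dμ(x)`. -/
noncomputable def charFun {E : Type*} [NormedAddCommGroup E] [InnerProductSpace ℝ E]
    [MeasurableSpace E] (μ : Measure E) (u : E) : ℂ :=
  ∫ x, Complex.exp (Complex.I * ((inner ℝ u x : ℝ) : ℂ)) ∂μ

/-- The digamma function `ψ(z) = Γ'(z) / Γ(z)`. -/
noncomputable def digamma (z : ℝ) : ℝ := deriv Real.Gamma z / Real.Gamma z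

/-- The trigamma function `ψ'(z)`, the derivative of the digamma function. -/
noncomputable def trigamma (z : ℝ) : ℝ := deriv digamma z

/-- The standard Gaussian measure on `ℝⁿ`: the `n`-fold product of the real Gaussian
measure with mean `0` and variance `1`, viewed as a measure on `EuclideanSpace ℝ (Fin n)`. -/
noncomputable def stdGaussian (n : ℕ) : Measure (EuclideanSpace ℝ (Fin n)) :=
  Measure.map (MeasurableEquiv.toLp 2 (Fin n → ℝ))
    (Measure.pi fun _ : Fin n => ProbabilityTheory.gaussianReal 0 1)

open Set
open scoped ENNReal NNReal

namespace MeasureTheory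

theorem lintegral_fin_nat_prod_eq_prod {n : ℕ} {α : Type*}
    [MeasurableSpace α] {μ : Fin n → Measure α} [∀ i, SigmaFinite (μ i)]
    {f : Fin n → α → ℝ≥0∞} (hf : ∀ i, Measurable (f i)) :
    ∫⁻ x, ∏ i, f i (x i) ∂Measure.pi μ = ∏ i, ∫⁻ x, f i x ∂μ i := by
  induction n with
  | zero => simp
  | succ n ih =>
    calc ∫⁻ x, ∏ i, f i (x i) ∂Measure.pi μ
        = ∫⁻ x, f 0 x.1 * ∏ i : Fin n, f i.succ (x.2 i) ∂(μ 0).prod (.pi fun i ↦ μ i.succ) := by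
          rw [← (measurePreserving_piFinSuccAbove μ 0).symm.lintegral_comp_emb
            (MeasurableEquiv.measurableEmbedding _)]
          simp_rw [MeasurableEquiv.piFinSuccAbove_symm_apply, Fin.insertNthEquiv,
            Fin.prod_univ_succ, Fin.insertNth_zero, Equiv.coe_fn_mk, Fin.cons_succ,
            Fin.zero_succAbove, cast_eq, Fin.cons_zero]
      _ = (∫⁻ x, f 0 x ∂μ 0) * ∏ i : Fin n, ∫⁻ x, f i.succ x ∂μ i.succ := by
          rw [← ih fun i ↦ hf i.succ, ← lintegral_prod_mul (hf 0).aemeasurable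
            (Finset.measurable_prod _ fun i _ ↦ (hf i.succ).comp (measurable_pi_apply i)).aemeasurable]
      _ = ∏ i, ∫⁻ x, f i x ∂μ i := (Fin.prod_univ_succ fun i ↦ ∫⁻ x, f i x ∂μ i).symm

theorem lintegral_fintype_prod_eq_prod {ι : Type*} [Fintype ι] {α : Type*}
    [MeasurableSpace α] {μ : ι → Measure α} [∀ i, SigmaFinite (μ i)]
    {f : ι → α → ℝ≥0∞} (hf : ∀ i, Measurable (f i)) :
    ∫⁻ x, ∏ i, f i (x i) ∂Measure.pi μ = ∏ i, ∫⁻ x, f i x ∂μ i := by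
  let e := (Fintype.equivFin ι).symm
  rw [← (measurePreserving_piCongrLeft _ e).lintegral_comp_emb
    (MeasurableEquiv.measurableEmbedding _)]
  simp_rw [← e.prod_comp, MeasurableEquiv.coe_piCongrLeft, Equiv.piCongrLeft_apply_apply]
  exact lintegral_fin_nat_prod_eq_prod fun i ↦ hf (e i)

theorem Measure.pi_withDensity {ι : Type*} [Fintype ι] {α : Type*}
    [MeasurableSpace α] (μ : ι → Measure α) [∀ i, SigmaFinite (μ i)]
    {f : ι → α → ℝ≥0∞} (hf : ∀ i, Measurable (f i))
    [∀ i, SigmaFinite ((μ i).withDensity (f i))] :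
    Measure.pi (fun i ↦ (μ i).withDensity (f i)) =
      (Measure.pi μ).withDensity fun x ↦ ∏ i, f i (x i) := by
  refine Measure.pi_eq fun s hs ↦ ?_
  rw [withDensity_apply _ (MeasurableSet.univ_pi hs), Measure.restrict_pi_pi,
    lintegral_fintype_prod_eq_prod hf]
  exact Finset.prod_congr rfl fun i _ ↦ (withDensity_apply _ (hs i)).symm

end MeasureTheory

namespace ProbabilityTheory

open MeasureTheory

lemma pi_gaussianReal_eq_withDensity {ι : Type*} [Fintype ι] (m : ι → ℝ) {v : ι → ℝ≥0}
    (hv : ∀ i, v i ≠ 0) :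
    Measure.pi (fun i ↦ gaussianReal (m i) (v i)) =
      volume.withDensity fun y ↦ ∏ i, gaussianPDF (m i) (v i) (y i) := by
  have h : ∀ i, gaussianReal (m i) (v i) = volume.withDensity (gaussianPDF (m i) (v i)) :=
    fun i ↦ gaussianReal_of_var_ne_zero _ (hv i)
  have : ∀ i, SigmaFinite (volume.withDensity (gaussianPDF (m i) (v i))) := by
    intro i; rw [← h i]; infer_instance
  simp_rw [h]
  rw [Measure.pi_withDensity _ fun i ↦ measurable_gaussianPDF _ _, volume_pi]

lemma prod_gaussianPDFReal_zero_one {ι : Type*} [Fintype ι] (y : ι → ℝ) :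
    ∏ i, gaussianPDFReal 0 1 (y i) =
      (√(2 * π))⁻¹ ^ Fintype.card ι * exp (-‖WithLp.toLp 2 y‖ ^ 2 / 2) := by
  simp only [gaussianPDFReal, NNReal.coe_one, mul_one, sub_zero, Finset.prod_mul_distrib,
    Finset.prod_const, ← exp_sum, EuclideanSpace.norm_sq_eq, Finset.card_univ]
  congr 2
  rw [← Finset.sum_div, ← Finset.sum_neg_distrib]
  simp

end ProbabilityTheory

lemma integral_stdGaussian_eq_integral_mul_exp (n : ℕ) (g : EuclideanSpace ℝ (Fin n) → ℝ) :
    ∫ x, g x ∂stdGaussian n = ∫ x, (√(2 * π))⁻¹ ^ n * exp (-‖x‖ ^ 2 / 2) * g x := by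
  rw [stdGaussian, integral_map_equiv,
    ProbabilityTheory.pi_gaussianReal_eq_withDensity _ fun _ ↦ one_ne_zero,
    integral_withDensity_eq_integral_toReal_smul (by fun_prop) (.of_forall fun _ ↦
      ENNReal.prod_lt_top fun _ _ ↦ ProbabilityTheory.gaussianPDF_lt_top),
    ← (EuclideanSpace.volume_preserving_symm_measurableEquiv_toLp (Fin n)).symm.integral_comp']
  refine integral_congr_ae (.of_forall fun y ↦ ?_)
  simp only [ProbabilityTheory.gaussianPDF, ENNReal.toReal_prod, smul_eq_mul,
    ENNReal.toReal_ofReal (ProbabilityTheory.gaussianPDFReal_nonneg _ _ _),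
    ProbabilityTheory.prod_gaussianPDFReal_zero_one, Fintype.card_fin]
  rfl

namespace Real

lemma integrableOn_rpow_mul_exp_neg_mul_log {s : ℝ} (hs : 0 < s) :
    IntegrableOn (fun t ↦ t ^ (s - 1) * exp (-t) * log t) (Ioi 0) := by
  have hconv : MellinConvergent (fun t : ℝ ↦ log t • ((exp (-t) : ℝ) : ℂ)) s := by
    refine (mellin_hasDerivAt_of_isBigO_rpow (a := s + 1) (b := 0) ?_ ?_ (by simp) ?_
      (by simpa using hs)).1
    · exact (Continuous.continuousOn (by fun_prop)).locallyIntegrableOn measurableSet_Ioi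
    · rw [← Asymptotics.isBigO_norm_left]
      simp_rw [Complex.norm_real, Asymptotics.isBigO_norm_left]
      simpa only [neg_one_mul] using (isLittleO_exp_neg_mul_rpow_atTop zero_lt_one _).isBigO
    · simp_rw [neg_zero, rpow_zero]
      refine Asymptotics.isBigO_const_of_tendsto (y := (1 : ℂ)) ?_ one_ne_zero
      exact ((by fun_prop : Continuous fun t : ℝ ↦ ((exp (-t) : ℝ) : ℂ)).tendsto' 0 1
        (by simp)).mono_left nhdsWithin_le_nhds
  refine IntegrableOn.congr_fun (Integrable.re hconv) (fun t (ht : 0 < t) ↦ ?_) measurableSet_Ioi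
  rw [show (s : ℂ) - 1 = ((s - 1 : ℝ) : ℂ) by push_cast; ring, ← Complex.ofReal_cpow ht.le]
  simp only [Complex.real_smul, smul_eq_mul, RCLike.re_to_complex]
  norm_cast
  ring

lemma integral_rpow_mul_exp_neg_mul_log {s : ℝ} (hs : 0 < s) :
    ∫ t in Ioi 0, t ^ (s - 1) * exp (-t) * log t = deriv Gamma s := by
  have hC := Complex.hasDerivAt_GammaIntegral (s := s) (by simpa using hs)
  have hGamma : Complex.GammaIntegral =ᶠ[𝓝 (s : ℂ)] Complex.Gamma := by
    filter_upwards [(isOpen_lt continuous_const Complex.continuous_re).mem_nhds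
      (show (0 : ℝ) < (s : ℂ).re by simpa using hs)] with z hz
    exact (Complex.Gamma_eq_integral hz).symm
  have hR := (hC.congr_of_eventuallyEq hGamma.symm).real_of_complex
  simp only [Complex.Gamma_ofReal, Complex.ofReal_re] at hR
  rw [hR.deriv, ← Complex.ofReal_re (∫ t in Ioi 0, _), ← integral_complex_ofReal]
  congr 1
  refine setIntegral_congr_fun measurableSet_Ioi fun t (ht : 0 < t) ↦ ?_
  rw [show (s : ℂ) - 1 = ((s - 1 : ℝ) : ℂ) by push_cast; ring, ← Complex.ofReal_cpow ht.le]
  push_cast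
  ring

lemma integral_rpow_mul_exp_neg_sq_div_two_mul_comp (s : ℝ) (h : ℝ → ℝ) :
    ∫ r in Ioi 0, r ^ (2 * s - 1) * exp (-r ^ 2 / 2) * h (r ^ 2 / 2) =
      2 ^ (s - 1) * ∫ t in Ioi 0, t ^ (s - 1) * exp (-t) * h t := by
  set F : ℝ → ℝ := fun y ↦ y ^ (s - 1) * exp (-y / 2) * h (y / 2) / 2
  calc ∫ r in Ioi 0, r ^ (2 * s - 1) * exp (-r ^ 2 / 2) * h (r ^ 2 / 2)
      = ∫ r in Ioi 0, (2 * r ^ ((2 : ℝ) - 1)) • F (r ^ (2 : ℝ)) := by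
        refine setIntegral_congr_fun measurableSet_Ioi fun r (hr : 0 < r) ↦ ?_
        have hpow : r ^ (2 * s - 1) = r * (r ^ 2) ^ (s - 1) := by
          rw [show 2 * s - 1 = 1 + 2 * (s - 1) by ring, rpow_add hr, rpow_one, rpow_mul hr.le]
          norm_num
        simp only [F, smul_eq_mul, rpow_two, hpow]
        norm_num
        ring
    _ = ∫ y in Ioi 0, F y := integral_comp_rpow_Ioi_of_pos two_pos
    _ = (2 : ℝ) • ∫ t in Ioi 0, F (2 * t) := by
        rw [integral_comp_mul_left_Ioi' F 0 two_pos, mul_zero]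
    _ = 2 ^ (s - 1) * ∫ t in Ioi 0, t ^ (s - 1) * exp (-t) * h t := by
        rw [smul_eq_mul, ← integral_const_mul, ← integral_const_mul]
        refine setIntegral_congr_fun measurableSet_Ioi fun t (ht : 0 < t) ↦ ?_
        simp only [F, mul_rpow two_pos.le ht.le]
        field_simp

lemma integral_rpow_mul_exp_neg_sq_div_two {s : ℝ} (hs : 0 < s) :
    ∫ r in Ioi 0, r ^ (2 * s - 1) * exp (-r ^ 2 / 2) = 2 ^ (s - 1) * Gamma s := by
  simpa [Gamma_eq_integral hs, mul_comm (exp _)] using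
    integral_rpow_mul_exp_neg_sq_div_two_mul_comp s fun _ ↦ 1

lemma integral_rpow_mul_exp_neg_sq_div_two_mul_log {s : ℝ} (hs : 0 < s) :
    ∫ r in Ioi 0, r ^ (2 * s - 1) * exp (-r ^ 2 / 2) * log r =
      2 ^ (s - 1) * ((log 2 * Gamma s + deriv Gamma s) / 2) := by
  have hlog : ∀ r > 0, log r = log (2 * (r ^ 2 / 2)) / 2 := fun r hr ↦ by
    rw [mul_div_cancel₀ _ two_ne_zero, log_pow]; push_cast; ring
  rw [setIntegral_congr_fun measurableSet_Ioi fun r hr ↦ by rw [hlog r hr],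
    integral_rpow_mul_exp_neg_sq_div_two_mul_comp s fun t ↦ log (2 * t) / 2]
  congr 1
  calc ∫ t in Ioi 0, t ^ (s - 1) * exp (-t) * (log (2 * t) / 2)
      = (∫ t in Ioi 0, exp (-t) * t ^ (s - 1) * log 2 +
          t ^ (s - 1) * exp (-t) * log t) / 2 := by
        rw [← integral_div]
        refine setIntegral_congr_fun measurableSet_Ioi fun t (ht : 0 < t) ↦ ?_
        rw [log_mul two_ne_zero ht.ne']
        ring
    _ = (log 2 * Gamma s + deriv Gamma s) / 2 := by
        rw [integral_add ((GammaIntegral_convergent hs).mul_const _)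
          (integrableOn_rpow_mul_exp_neg_mul_log hs), integral_mul_const,
          integral_rpow_mul_exp_neg_mul_log hs, ← Gamma_eq_integral hs, mul_comm]

end Real

instance (n : ℕ) : IsProbabilityMeasure (stdGaussian n) :=
  Measure.isProbabilityMeasure_map (by fun_prop)

lemma exists_integral_norm_stdGaussian (n : ℕ) (hn : 1 ≤ n) :
    ∃ C : ℝ, ∀ f : ℝ → ℝ, ∫ x, f ‖x‖ ∂stdGaussian n =
      C * ∫ r in Ioi 0, r ^ ((n : ℝ) - 1) * exp (-r ^ 2 / 2) * f r := by
  have : Nonempty (Fin n) := ⟨⟨0, hn⟩⟩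
  refine ⟨n * volume.real (Metric.ball (0 : EuclideanSpace ℝ (Fin n)) 1) * (√(2 * π))⁻¹ ^ n,
    fun f ↦ ?_⟩
  rw [integral_stdGaussian_eq_integral_mul_exp, integral_fun_norm_addHaar volume
    (fun r ↦ (√(2 * π))⁻¹ ^ n * exp (-r ^ 2 / 2) * f r), finrank_euclideanSpace_fin,
    ← integral_const_mul, nsmul_eq_mul, smul_eq_mul, ← integral_const_mul, ← integral_const_mul]
  refine setIntegral_congr_fun measurableSet_Ioi fun r (hr : 0 < r) ↦ ?_
  rw [smul_eq_mul, ← rpow_natCast, Nat.cast_sub hn, Nat.cast_one]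
  ring

theorem mean_log_norm_stdGaussian (n : ℕ) (hn : 1 ≤ n) :
    ∫ x, Real.log ‖x‖ ∂(stdGaussian n) =
      (1 / 2) * Real.log 2 + (1 / 2) * digamma (n / 2) := by
  obtain ⟨C, hC⟩ := exists_integral_norm_stdGaussian n hn
  have hs : 0 < (n : ℝ) / 2 := by positivity
  have hexp : (n : ℝ) - 1 = 2 * (n / 2) - 1 := by ring
  have hmass : C * 2 ^ ((n : ℝ) / 2 - 1) = (Gamma (n / 2))⁻¹ := by
    have h := hC fun _ ↦ 1
    simp only [integral_const, probReal_univ, smul_eq_mul, mul_one] at h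
    rw [hexp, Real.integral_rpow_mul_exp_neg_sq_div_two hs] at h
    exact eq_inv_of_mul_eq_one_left (by rw [mul_assoc, ← h])
  rw [hC log, hexp, Real.integral_rpow_mul_exp_neg_sq_div_two_mul_log hs, ← mul_assoc, hmass,
    digamma]
  field_simp [(Gamma_pos_of_pos hs).ne']
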